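/- arXiv:2205.14500 — 5 statements merged into one kernel-verified Lean document; each statement's English description precedes it below -/
import Mathlib

section
/- Theorem 1 (integrality of the flow formulation). For every feasible flow assignment of a layered decision-diagram skeleton, every variable w⁻_u, w⁺_u (u ∈ V^I) and every variable z⁻_{uv}, z⁺_{uv} (u ∈ V^I, v ∈ δ⁺(u)) takes a value in {0,1}, even though only the λ, d and y variables are required to be binary. -/
/-- A layered decision-diagram skeleton: depth `D ≥ 1`, pairwise-disjoint nonempty
layers `V 0, …, V (D-1)` of internal nodes with `V 0 = {r}` (the root), and a
nonempty set `C` of terminal nodes disjoint from every layer. -/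
structure Skeleton (Node : Type) [DecidableEq Node] where
  D : ℕ
  hD : 1 ≤ D
  V : ℕ → Finset Node
  C : Finset Node
  r : Node
  hV0 : V 0 = {r}
  hVne : ∀ l, l < D → (V l).Nonempty
  hVdisj : ∀ l l', l < D → l' < D → l ≠ l' → Disjoint (V l) (V l')
  hCne : C.Nonempty
  hVC : ∀ l, l < D → Disjoint (V l) C

/-- The successor set `δ⁺(u)` of a node in layer `l`:
`V (l+1) ∪ C` if `l < D - 1`, and `C` if `l = D - 1`. -/
def Skeleton.succ {Node : Type} [DecidableEq Node] (S : Skeleton Node) (l : ℕ) :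
    Finset Node :=
  if l < S.D - 1 then S.V (l + 1) ∪ S.C else S.C

/-- A feasible flow assignment for a single sample on a layered decision-diagram
skeleton: nonnegative flows `wm, wp, zm, zp`, binary `lam, d, ym, yp` (with
`d r = 1`), subject to constraints (C1)–(C5). -/
structure FeasibleFlow {Node : Type} [DecidableEq Node] (S : Skeleton Node) where
  wm : Node → ℝ
  wp : Node → ℝ
  zm : Node → Node → ℝ
  zp : Node → Node → ℝ
  lam : ℕ → ℝ
  d : Node → ℝ
  ym : Node → Node → ℝ
  yp : Node → Node → ℝ
  wm_nonneg : ∀ u, 0 ≤ wm u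
  wp_nonneg : ∀ u, 0 ≤ wp u
  zm_nonneg : ∀ u v, 0 ≤ zm u v
  zp_nonneg : ∀ u v, 0 ≤ zp u v
  lam_bin : ∀ l, l < S.D → lam l = 0 ∨ lam l = 1
  d_bin : ∀ l, l < S.D → ∀ u ∈ S.V l, d u = 0 ∨ d u = 1
  d_root : d S.r = 1
  ym_bin : ∀ l, l < S.D → ∀ u ∈ S.V l, ∀ v ∈ S.succ l, ym u v = 0 ∨ ym u v = 1
  yp_bin : ∀ l, l < S.D → ∀ u ∈ S.V l, ∀ v ∈ S.succ l, yp u v = 0 ∨ yp u v = 1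
  c1_root : wp S.r + wm S.r = 1
  c1 : ∀ l, 1 ≤ l → l < S.D → ∀ v ∈ S.V l,
      wp v + wm v = ∑ u ∈ S.V (l - 1), (zp u v + zm u v)
  c2m : ∀ l, l < S.D → ∀ u ∈ S.V l, wm u = ∑ v ∈ S.succ l, zm u v
  c2p : ∀ l, l < S.D → ∀ u ∈ S.V l, wp u = ∑ v ∈ S.succ l, zp u v
  c3m : ∀ l, l < S.D → ∑ u ∈ S.V l, wm u ≤ 1 - lam l
  c3p : ∀ l, l < S.D → ∑ u ∈ S.V l, wp u ≤ lam l
  c4p : ∀ l, l < S.D → ∀ u ∈ S.V l, d u = ∑ v ∈ S.succ l, yp u v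
  c4m : ∀ l, l < S.D → ∀ u ∈ S.V l, d u = ∑ v ∈ S.succ l, ym u v
  c5p : ∀ l, l < S.D → ∀ u ∈ S.V l, ∀ v ∈ S.succ l, zp u v ≤ yp u v
  c5m : ∀ l, l < S.D → ∀ u ∈ S.V l, ∀ v ∈ S.succ l, zm u v ≤ ym u v

/-!
By (C3) a layer carries at most one unit of flow in total, and since `λ_l` is binary, one of
the two signs carries none on it. The `y`'s leaving a node sum to the binary `d_u`, so at most
one of them is `1`; as they dominate the `z`'s, the whole outflow of either sign leaves along a
single arc, and the `z`'s at `u` are binary once `w⁻_u, w⁺_u` are. The inflow `w⁺_v + w⁻_v` of a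
node of the next layer is then a sum of terms each `0` or `≥ 1`, and at most `1`, so it is
binary; the sign vanishing on that layer splits it into binary `w⁻_v, w⁺_v`. Induct on the layer.
-/

open Finset

section Binary

variable {α : Type*} {s : Finset α}

lemma sum_eq_zero_or_one_le_sum {f : α → ℝ} (hf : ∀ i ∈ s, f i = 0 ∨ 1 ≤ f i) :
    ∑ i ∈ s, f i = 0 ∨ 1 ≤ ∑ i ∈ s, f i := by
  have hf_nonneg : ∀ i ∈ s, 0 ≤ f i := fun i hi => by
    rcases hf i hi with h | h <;> linarith
  by_cases hzero : ∀ i ∈ s, f i = 0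
  · exact Or.inl (sum_eq_zero hzero)
  · push Not at hzero
    obtain ⟨i, hi, hne⟩ := hzero
    exact Or.inr (((hf i hi).resolve_left hne).trans (single_le_sum hf_nonneg hi))

variable [DecidableEq α] {y z : α → ℝ}

lemma eq_zero_or_eq_sum_of_le_binary (hz : ∀ v ∈ s, 0 ≤ z v) (hzy : ∀ v ∈ s, z v ≤ y v)
    (hy : ∀ v ∈ s, y v = 0 ∨ y v = 1) (hy_sum : ∑ v ∈ s, y v ≤ 1) {v : α} (hv : v ∈ s) :
    z v = 0 ∨ z v = ∑ w ∈ s, z w := by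
  rcases hy v hv with hyv | hyv
  · left
    linarith [hz v hv, hzy v hv]
  · right
    have hz_rest : 0 ≤ ∑ w ∈ s.erase v, z w := sum_nonneg fun w hw => hz w (mem_of_mem_erase hw)
    have hzy_rest : ∑ w ∈ s.erase v, z w ≤ ∑ w ∈ s.erase v, y w :=
      sum_le_sum fun w hw => hzy w (mem_of_mem_erase hw)
    linarith [add_sum_erase s z hv, add_sum_erase s y hv]

lemma binary_of_le_binary (hz : ∀ v ∈ s, 0 ≤ z v) (hzy : ∀ v ∈ s, z v ≤ y v)
    (hy : ∀ v ∈ s, y v = 0 ∨ y v = 1) (hy_sum : ∑ v ∈ s, y v ≤ 1)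
    (hz_sum : ∑ v ∈ s, z v = 0 ∨ ∑ v ∈ s, z v = 1) {v : α} (hv : v ∈ s) :
    z v = 0 ∨ z v = 1 := by
  rcases eq_zero_or_eq_sum_of_le_binary hz hzy hy hy_sum hv with h | h
  · exact Or.inl h
  · rwa [h]

end Binary

lemma binary_of_add_binary {a b : ℝ} (ha : 0 ≤ a) (hb : 0 ≤ b) (hab : a = 0 ∨ b = 0)
    (h : a + b = 0 ∨ a + b = 1) : (a = 0 ∨ a = 1) ∧ (b = 0 ∨ b = 1) := by
  rcases hab with hab | hab <;> subst hab <;> simp only [zero_add, add_zero] at h <;>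
    simp [h]

namespace FeasibleFlow

variable {Node : Type} [DecidableEq Node] {S : Skeleton Node} (F : FeasibleFlow S)
  {l : ℕ}

lemma layer_sum_le_one (hl : l < S.D) :
    ∑ u ∈ S.V l, (F.wp u + F.wm u) ≤ 1 := by
  rw [sum_add_distrib]
  linarith [F.c3p l hl, F.c3m l hl]

lemma wm_eq_zero_or_wp_eq_zero (hl : l < S.D) :
    (∀ u ∈ S.V l, F.wm u = 0) ∨ (∀ u ∈ S.V l, F.wp u = 0) := by
  rcases F.lam_bin l hl with hlam | hlam
  · right
    refine (sum_eq_zero_iff_of_nonneg fun u _ => F.wp_nonneg u).mp (le_antisymm ?_ ?_)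
    · linarith [F.c3p l hl]
    · exact sum_nonneg fun u _ => F.wp_nonneg u
  · left
    refine (sum_eq_zero_iff_of_nonneg fun u _ => F.wm_nonneg u).mp (le_antisymm ?_ ?_)
    · linarith [F.c3m l hl]
    · exact sum_nonneg fun u _ => F.wm_nonneg u

lemma binary_of_inflow_binary (hl : l < S.D) {v : Node} (hv : v ∈ S.V l)
    (h : F.wp v + F.wm v = 0 ∨ F.wp v + F.wm v = 1) :
    (F.wm v = 0 ∨ F.wm v = 1) ∧ (F.wp v = 0 ∨ F.wp v = 1) := by
  refine binary_of_add_binary (F.wm_nonneg v) (F.wp_nonneg v) ?_ (by rwa [add_comm])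
  rcases F.wm_eq_zero_or_wp_eq_zero hl with h0 | h0
  · exact Or.inl (h0 v hv)
  · exact Or.inr (h0 v hv)

lemma z_binary (hl : l < S.D) {u : Node} (hu : u ∈ S.V l)
    (hwm : F.wm u = 0 ∨ F.wm u = 1) (hwp : F.wp u = 0 ∨ F.wp u = 1) {v : Node}
    (hv : v ∈ S.succ l) : (F.zm u v = 0 ∨ F.zm u v = 1) ∧ (F.zp u v = 0 ∨ F.zp u v = 1) := by
  have hd : F.d u ≤ 1 := by rcases F.d_bin l hl u hu with h | h <;> linarith
  constructor
  · refine binary_of_le_binary (fun v _ => F.zm_nonneg u v) (F.c5m l hl u hu)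
      (F.ym_bin l hl u hu) ?_ ?_ hv
    · rwa [← F.c4m l hl u hu]
    · rwa [← F.c2m l hl u hu]
  · refine binary_of_le_binary (fun v _ => F.zp_nonneg u v) (F.c5p l hl u hu)
      (F.yp_bin l hl u hu) ?_ ?_ hv
    · rwa [← F.c4p l hl u hu]
    · rwa [← F.c2p l hl u hu]

lemma inflow_eq_zero_or_one_le (hl : l + 1 < S.D)
    (hw : ∀ u ∈ S.V l, (F.wm u = 0 ∨ F.wm u = 1) ∧ (F.wp u = 0 ∨ F.wp u = 1))
    {v : Node} (hv : v ∈ S.V (l + 1)) :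
    F.wp v + F.wm v = 0 ∨ 1 ≤ F.wp v + F.wm v := by
  have hv_succ : v ∈ S.succ l := by
    rw [Skeleton.succ, if_pos (by omega)]
    exact mem_union_left _ hv
  rw [F.c1 (l + 1) (by omega) hl v hv, Nat.add_sub_cancel]
  refine sum_eq_zero_or_one_le_sum fun u hu => ?_
  obtain ⟨hzm, hzp⟩ := F.z_binary (by omega) hu (hw u hu).1 (hw u hu).2 hv_succ
  rcases hzm with h | h <;> rcases hzp with h' | h' <;> simp [h, h']

lemma w_binary : ∀ l < S.D, ∀ u ∈ S.V l,
    (F.wm u = 0 ∨ F.wm u = 1) ∧ (F.wp u = 0 ∨ F.wp u = 1) := by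
  intro l
  induction l with
  | zero =>
    intro hl u hu
    rw [S.hV0, mem_singleton] at hu
    subst hu
    exact F.binary_of_inflow_binary hl (S.hV0 ▸ mem_singleton_self S.r) (Or.inr F.c1_root)
  | succ l ih =>
    intro hl v hv
    have hv_le : F.wp v + F.wm v ≤ 1 :=
      (single_le_sum (fun w _ => add_nonneg (F.wp_nonneg w) (F.wm_nonneg w)) hv).trans
        (F.layer_sum_le_one hl)
    refine F.binary_of_inflow_binary hl hv ?_
    rcases F.inflow_eq_zero_or_one_le hl (ih (by omega)) hv with h | h
    · exact Or.inl h
    · exact Or.inr (le_antisymm hv_le h)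

end FeasibleFlow

/-- **Theorem 1 (integrality of the flow formulation).**
For every feasible flow assignment of a layered decision-diagram skeleton, every
variable `w⁻_u`, `w⁺_u` (`u ∈ V^I`) and every variable `z⁻_{uv}`, `z⁺_{uv}`
(`u ∈ V^I`, `v ∈ δ⁺(u)`) takes a value in `{0,1}`. -/
theorem flow_integrality {Node : Type} [DecidableEq Node]
    (S : Skeleton Node) (F : FeasibleFlow S) :
    ∀ l, l < S.D → ∀ u ∈ S.V l,
      (F.wm u = 0 ∨ F.wm u = 1) ∧ (F.wp u = 0 ∨ F.wp u = 1) ∧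
      ∀ v ∈ S.succ l,
        (F.zm u v = 0 ∨ F.zm u v = 1) ∧ (F.zp u v = 0 ∨ F.zp u v = 1) := by
  intro l hl u hu
  obtain ⟨hwm, hwp⟩ := F.w_binary l hl u hu
  exact ⟨hwm, hwp, fun v hv => F.z_binary hl hu hwm hwp hv⟩
end

section
/- Layer-uniqueness invariant (inductive claim in the proof of Theorem 1). For every feasible flow assignment of a layered decision-diagram skeleton and every layer l ∈ {0, …, D−1}: every node u ∈ V_l satisfies w⁺_u + w⁻_u ∈ {0,1}, and there is at most one node ū ∈ V_l with w⁺_ū + w⁻_ū = 1, while all other nodes u ∈ V_l satisfy w⁺_u + w⁻_u = 0. -/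
/-!
Induct over the layers, carrying two facts: every node of the layer carries flow `0` or `1`, and
the layer carries total flow at most `1` (flow is conserved from layer to layer except for what
leaves to the terminals). The second fact leaves room for only one node of flow `1`. For the
first, `λ_l` forces a node of flow `1` to send it all with one sign, and there `z ≤ y` with
`∑ y = d ≤ 1 = ∑ z`, so every arc carries a binary value `y`. A node of the next layer thus
receives a sum of `{0,1}`-values that is at most `1`, which is `0` or `1`.
-/

theorem Finset.eq_zero_of_sum_le_of_ne {ι M : Type*} [AddCommMonoid M] [PartialOrder M]
    [IsOrderedCancelAddMonoid M] {s : Finset ι} {f : ι → M} (hf : ∀ i ∈ s, 0 ≤ f i)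
    {j : ι} (hj : j ∈ s) (hsum : ∑ i ∈ s, f i ≤ f j) {i : ι} (hi : i ∈ s) (hij : i ≠ j) :
    f i = 0 :=
  le_antisymm (add_le_iff_nonpos_left.mp ((Finset.add_le_sum hf hi hj hij).trans hsum)) (hf i hi)

theorem Finset.sum_eq_zero_or_one_of_le_one {ι R : Type*} [AddCommMonoidWithOne R]
    [PartialOrder R] [IsOrderedCancelAddMonoid R] [ZeroLEOneClass R] {s : Finset ι} {f : ι → R}
    (hf : ∀ i ∈ s, f i = 0 ∨ f i = 1)
    (hsum : ∑ i ∈ s, f i ≤ 1) : ∑ i ∈ s, f i = 0 ∨ ∑ i ∈ s, f i = 1 := by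
  classical
  induction s using Finset.induction_on with
  | empty => simp
  | insert a s ha ih =>
    rw [Finset.sum_insert ha] at hsum ⊢
    have hf' : ∀ i ∈ s, f i = 0 ∨ f i = 1 := fun i hi => hf i (Finset.mem_insert_of_mem hi)
    have hs_nonneg : 0 ≤ ∑ i ∈ s, f i :=
      Finset.sum_nonneg fun i hi => by rcases hf' i hi with h | h <;> simp [h]
    rcases hf a (Finset.mem_insert_self a s) with h | h
    · simpa [h] using ih hf' (by simpa [h] using hsum)
    · rw [h] at hsum ⊢
      right
      rw [le_antisymm ((add_le_iff_nonpos_right 1).mp hsum) hs_nonneg, add_zero]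

theorem Finset.eq_zero_or_one_of_le_of_sum_le {ι R : Type*} [AddCommMonoidWithOne R]
    [PartialOrder R] [IsOrderedCancelAddMonoid R] {s : Finset ι} {z y : ι → R}
    (hzy : ∀ i ∈ s, z i ≤ y i)
    (hy : ∀ i ∈ s, y i = 0 ∨ y i = 1) (hsum : ∑ i ∈ s, y i ≤ ∑ i ∈ s, z i) :
    ∀ i ∈ s, z i = 0 ∨ z i = 1 := by
  have hzy_eq := (Finset.sum_eq_sum_iff_of_le hzy).mp
    (le_antisymm (Finset.sum_le_sum hzy) hsum)
  intro i hi
  rw [hzy_eq i hi]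
  exact hy i hi

namespace Skeleton

variable {Node : Type} [DecidableEq Node] (S : Skeleton Node)

theorem V_succ_subset_succ {l : ℕ} (hl : l + 1 < S.D) : S.V (l + 1) ⊆ S.succ l := by
  rw [Skeleton.succ, if_pos (by omega)]
  exact Finset.subset_union_left

end Skeleton

namespace FeasibleFlow

variable {Node : Type} [DecidableEq Node] {S : Skeleton Node} (F : FeasibleFlow S)

def flow (u : Node) : ℝ := F.wp u + F.wm u

theorem flow_nonneg (u : Node) : 0 ≤ F.flow u :=
  add_nonneg (F.wp_nonneg u) (F.wm_nonneg u)

theorem flow_eq_sum_out {l : ℕ} (hl : l < S.D) {u : Node} (hu : u ∈ S.V l) :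
    F.flow u = ∑ v ∈ S.succ l, (F.zp u v + F.zm u v) := by
  rw [Finset.sum_add_distrib, ← F.c2p l hl u hu, ← F.c2m l hl u hu, flow]

theorem flow_eq_sum_in {l : ℕ} (hl : l + 1 < S.D) {v : Node} (hv : v ∈ S.V (l + 1)) :
    F.flow v = ∑ u ∈ S.V l, (F.zp u v + F.zm u v) :=
  F.c1 (l + 1) (Nat.le_add_left 1 l) hl v hv

theorem sum_flow_succ_le {l : ℕ} (hl : l + 1 < S.D) :
    ∑ v ∈ S.V (l + 1), F.flow v ≤ ∑ u ∈ S.V l, F.flow u :=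
  calc ∑ v ∈ S.V (l + 1), F.flow v
      = ∑ u ∈ S.V l, ∑ v ∈ S.V (l + 1), (F.zp u v + F.zm u v) := by
        rw [Finset.sum_congr rfl fun v hv => F.flow_eq_sum_in hl hv, Finset.sum_comm]
    _ ≤ ∑ u ∈ S.V l, ∑ v ∈ S.succ l, (F.zp u v + F.zm u v) :=
        Finset.sum_le_sum fun u _ => Finset.sum_le_sum_of_subset_of_nonneg
          (S.V_succ_subset_succ hl) fun v _ _ => add_nonneg (F.zp_nonneg u v) (F.zm_nonneg u v)
    _ = ∑ u ∈ S.V l, F.flow u :=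
        Finset.sum_congr rfl fun u hu => (F.flow_eq_sum_out (by omega) hu).symm

theorem zp_eq_zero_of_wp_eq_zero {l : ℕ} (hl : l < S.D) {u : Node} (hu : u ∈ S.V l)
    (hwp : F.wp u = 0) {v : Node} (hv : v ∈ S.succ l) : F.zp u v = 0 :=
  (Finset.sum_eq_zero_iff_of_nonneg fun x _ => F.zp_nonneg u x).mp
    ((F.c2p l hl u hu).symm.trans hwp) v hv

theorem zm_eq_zero_of_wm_eq_zero {l : ℕ} (hl : l < S.D) {u : Node} (hu : u ∈ S.V l)
    (hwm : F.wm u = 0) {v : Node} (hv : v ∈ S.succ l) : F.zm u v = 0 :=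
  (Finset.sum_eq_zero_iff_of_nonneg fun x _ => F.zm_nonneg u x).mp
    ((F.c2m l hl u hu).symm.trans hwm) v hv

theorem d_le_one {l : ℕ} (hl : l < S.D) {u : Node} (hu : u ∈ S.V l) : F.d u ≤ 1 := by
  rcases F.d_bin l hl u hu with h | h <;> simp [h]

theorem zp_eq_zero_or_one_of_wp_eq_one {l : ℕ} (hl : l < S.D) {u : Node} (hu : u ∈ S.V l)
    (hwp : F.wp u = 1) : ∀ v ∈ S.succ l, F.zp u v = 0 ∨ F.zp u v = 1 :=
  Finset.eq_zero_or_one_of_le_of_sum_le (F.c5p l hl u hu) (F.yp_bin l hl u hu) <| by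
    rw [← F.c4p l hl u hu, ← F.c2p l hl u hu, hwp]
    exact F.d_le_one hl hu

theorem zm_eq_zero_or_one_of_wm_eq_one {l : ℕ} (hl : l < S.D) {u : Node} (hu : u ∈ S.V l)
    (hwm : F.wm u = 1) : ∀ v ∈ S.succ l, F.zm u v = 0 ∨ F.zm u v = 1 :=
  Finset.eq_zero_or_one_of_le_of_sum_le (F.c5m l hl u hu) (F.ym_bin l hl u hu) <| by
    rw [← F.c4m l hl u hu, ← F.c2m l hl u hu, hwm]
    exact F.d_le_one hl hu

theorem wp_eq_zero_or_wm_eq_zero {l : ℕ} (hl : l < S.D) {u : Node} (hu : u ∈ S.V l) :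
    F.wp u = 0 ∨ F.wm u = 0 := by
  rcases F.lam_bin l hl with hlam | hlam
  · left
    have hsum := F.c3p l hl
    rw [hlam] at hsum
    exact le_antisymm
      ((Finset.single_le_sum (fun x _ => F.wp_nonneg x) hu).trans hsum) (F.wp_nonneg u)
  · right
    have hsum := F.c3m l hl
    rw [hlam, sub_self] at hsum
    exact le_antisymm
      ((Finset.single_le_sum (fun x _ => F.wm_nonneg x) hu).trans hsum) (F.wm_nonneg u)

theorem arc_flow_eq_zero_or_one {l : ℕ} (hl : l < S.D) {u : Node} (hu : u ∈ S.V l)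
    (hflow : F.flow u = 0 ∨ F.flow u = 1) {v : Node} (hv : v ∈ S.succ l) :
    F.zp u v + F.zm u v = 0 ∨ F.zp u v + F.zm u v = 1 := by
  rcases F.wp_eq_zero_or_wm_eq_zero hl hu with hwp | hwm
  · rw [F.zp_eq_zero_of_wp_eq_zero hl hu hwp hv, zero_add]
    rcases hflow with h | h <;> rw [flow, hwp, zero_add] at h
    · exact Or.inl (F.zm_eq_zero_of_wm_eq_zero hl hu h hv)
    · exact F.zm_eq_zero_or_one_of_wm_eq_one hl hu h v hv
  · rw [F.zm_eq_zero_of_wm_eq_zero hl hu hwm hv, add_zero]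
    rcases hflow with h | h <;> rw [flow, hwm, add_zero] at h
    · exact Or.inl (F.zp_eq_zero_of_wp_eq_zero hl hu h hv)
    · exact F.zp_eq_zero_or_one_of_wp_eq_one hl hu h v hv

theorem flow_eq_zero_or_one_and_sum_flow_le_one :
    ∀ l, l < S.D → (∀ u ∈ S.V l, F.flow u = 0 ∨ F.flow u = 1) ∧ ∑ u ∈ S.V l, F.flow u ≤ 1
  | 0, _ => by simp [S.hV0, flow, F.c1_root]
  | l + 1, hl => by
    obtain ⟨hbin, hsum⟩ := flow_eq_zero_or_one_and_sum_flow_le_one l (by omega)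
    have hsum' := (F.sum_flow_succ_le hl).trans hsum
    refine ⟨fun v hv => ?_, hsum'⟩
    have hv_le : F.flow v ≤ 1 :=
      (Finset.single_le_sum (fun x _ => F.flow_nonneg x) hv).trans hsum'
    rw [F.flow_eq_sum_in hl hv] at hv_le ⊢
    exact Finset.sum_eq_zero_or_one_of_le_one
      (fun u hu => F.arc_flow_eq_zero_or_one (by omega) hu (hbin u hu)
        (S.V_succ_subset_succ hl hv)) hv_le

end FeasibleFlow

/-- **Layer-uniqueness invariant.** For every feasible flow assignment and every
layer `l < D`: every node `u ∈ V l` satisfies `w⁺_u + w⁻_u ∈ {0,1}`, and there is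
at most one node `ū ∈ V l` with `w⁺_ū + w⁻_ū = 1`, while all other nodes of the
layer satisfy `w⁺_u + w⁻_u = 0`. -/
theorem layer_uniqueness {Node : Type} [DecidableEq Node]
    (S : Skeleton Node) (F : FeasibleFlow S) :
    ∀ l, l < S.D →
      (∀ u ∈ S.V l, F.wp u + F.wm u = 0 ∨ F.wp u + F.wm u = 1) ∧
      (∀ ubar ∈ S.V l, F.wp ubar + F.wm ubar = 1 →
        ∀ u ∈ S.V l, u ≠ ubar → F.wp u + F.wm u = 0) := by
  intro l hl
  obtain ⟨hbin, hsum⟩ := F.flow_eq_zero_or_one_and_sum_flow_le_one l hl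
  exact ⟨hbin, fun ubar hubar hflow u hu hne =>
    Finset.eq_zero_of_sum_le_of_ne (fun x _ => F.flow_nonneg x) hubar
      (hsum.trans_eq hflow.symm) hu hne⟩
end

section
/- Unique-successor routing (step of the proof of Theorem 1). For every feasible flow assignment of a layered decision-diagram skeleton and every internal node ū ∈ V^I: if w⁺_ū = 1, then d_ū = 1, there exists a unique successor v̄ ∈ δ⁺(ū) with y⁺_{ūv̄} = 1, and for this v̄ one has z⁺_{ūv̄} = 1 while z⁺_{ūv} = 0 for every v ∈ δ⁺(ū) with v ≠ v̄. Symmetrically, if w⁻_ū = 1, then d_ū = 1, there exists a unique v̄ ∈ δ⁺(ū) with y⁻_{ūv̄} = 1, and z⁻_{ūv̄} = 1 while z⁻_{ūv} = 0 for every v ≠ v̄. -/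
section BinarySums

variable {ι R : Type*} [CommRing R] [LinearOrder R] [IsStrictOrderedRing R] {s : Finset ι}

theorem Finset.exists_eq_one_of_binary_of_sum_eq_one {y : ι → R}
    (hbin : ∀ v ∈ s, y v = 0 ∨ y v = 1) (hsum : ∑ v ∈ s, y v = 1) :
    ∃ a ∈ s, y a = 1 ∧ ∀ v ∈ s, v ≠ a → y v = 0 := by
  classical
  obtain ⟨a, ha, hya⟩ := Finset.exists_ne_zero_of_sum_ne_zero (hsum ▸ one_ne_zero)
  have hya : y a = 1 := (hbin a ha).resolve_left hya
  have hrest : ∑ v ∈ s.erase a, y v = 0 := by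
    have := Finset.add_sum_erase s y ha
    linarith
  have hnonneg : ∀ v ∈ s.erase a, 0 ≤ y v := fun v hv => by
    rcases hbin v (Finset.mem_of_mem_erase hv) with h | h <;> simp [h]
  refine ⟨a, ha, hya, fun v hv hva => ?_⟩
  exact (Finset.sum_eq_zero_iff_of_nonneg hnonneg).mp hrest v (Finset.mem_erase.mpr ⟨hva, hv⟩)

theorem Finset.unit_flow_uses_unique_arc {y z : ι → R} {d : R}
    (hbin : ∀ v ∈ s, y v = 0 ∨ y v = 1) (hz : ∀ v ∈ s, 0 ≤ z v) (hzy : ∀ v ∈ s, z v ≤ y v)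
    (hd : d = 0 ∨ d = 1) (hdy : d = ∑ v ∈ s, y v) (hflow : ∑ v ∈ s, z v = 1) :
    d = 1 ∧ ∃ a ∈ s, y a = 1 ∧ (∀ v ∈ s, y v = 1 → v = a) ∧
      z a = 1 ∧ ∀ v ∈ s, v ≠ a → z v = 0 := by
  have hd1 : d = 1 := by
    have : (1 : R) ≤ d := hflow ▸ hdy ▸ Finset.sum_le_sum hzy
    rcases hd with h | h
    · linarith
    · exact h
  obtain ⟨a, ha, hya, hy0⟩ := Finset.exists_eq_one_of_binary_of_sum_eq_one hbin (hdy ▸ hd1)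
  have hz0 : ∀ v ∈ s, v ≠ a → z v = 0 := fun v hv hva =>
    le_antisymm (hy0 v hv hva ▸ hzy v hv) (hz v hv)
  refine ⟨hd1, a, ha, hya, fun v hv hyv => ?_, ?_, hz0⟩
  · by_contra hva
    simp [hy0 v hv hva] at hyv
  · rwa [← Finset.sum_eq_single_of_mem a ha hz0]

end BinarySums

/-- **Unique-successor routing.** For every feasible flow assignment and every
internal node `ū` (in layer `l < D`): if `w⁺_ū = 1`, then `d_ū = 1`, there is a
unique successor `v̄ ∈ δ⁺(ū)` with `y⁺_{ūv̄} = 1`, and for this `v̄` one has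
`z⁺_{ūv̄} = 1` while `z⁺_{ūv} = 0` for every other successor `v`. Symmetrically
for the negative side. -/
theorem unique_successor_routing {Node : Type} [DecidableEq Node]
    (S : Skeleton Node) (F : FeasibleFlow S) :
    ∀ l, l < S.D → ∀ ubar ∈ S.V l,
      (F.wp ubar = 1 →
        F.d ubar = 1 ∧
        ∃ vbar ∈ S.succ l, F.yp ubar vbar = 1 ∧
          (∀ v ∈ S.succ l, F.yp ubar v = 1 → v = vbar) ∧
          F.zp ubar vbar = 1 ∧
          (∀ v ∈ S.succ l, v ≠ vbar → F.zp ubar v = 0)) ∧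
      (F.wm ubar = 1 →
        F.d ubar = 1 ∧
        ∃ vbar ∈ S.succ l, F.ym ubar vbar = 1 ∧
          (∀ v ∈ S.succ l, F.ym ubar v = 1 → v = vbar) ∧
          F.zm ubar vbar = 1 ∧
          (∀ v ∈ S.succ l, v ≠ vbar → F.zm ubar v = 0)) := by
  intro l hl ubar hu
  constructor
  · intro hw
    exact Finset.unit_flow_uses_unique_arc (F.yp_bin l hl ubar hu)
      (fun v _ => F.zp_nonneg ubar v) (F.c5p l hl ubar hu) (F.d_bin l hl ubar hu)
      (F.c4p l hl ubar hu) (F.c2p l hl ubar hu ▸ hw)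
  · intro hw
    exact Finset.unit_flow_uses_unique_arc (F.ym_bin l hl ubar hu)
      (fun v _ => F.zm_nonneg ubar v) (F.c5m l hl ubar hu) (F.d_bin l hl ubar hu)
      (F.c4m l hl ubar hu) (F.c2m l hl ubar hu ▸ hw)
end

section
/- Arc-flow product formula (claim in the proof of Theorem 1: z⁺_{uv} = 1 if and only if w⁺_u = 1 and y⁺_{uv} = 1, and z⁺_{uv} = 0 otherwise; the integrality of the z variables is implied by the integrality of the w variables). For every feasible flow assignment of a layered decision-diagram skeleton, every internal node u ∈ V^I, and every successor v ∈ δ⁺(u): z⁺_{uv} = w⁺_u · y⁺_{uv} and z⁻_{uv} = w⁻_u · y⁻_{uv}. -/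
namespace Finset

variable {ι : Type*} {s : Finset ι} {y z : ι → ℝ}

theorem eq_zero_of_ne_of_sum_le_one (hy : ∀ u ∈ s, 0 ≤ y u) (hsum : ∑ u ∈ s, y u ≤ 1)
    {a b : ι} (ha : a ∈ s) (hb : b ∈ s) (hab : b ≠ a) (hya : y a = 1) : y b = 0 :=
  le_antisymm (by linarith [add_le_sum hy ha hb hab.symm]) (hy b hb)

theorem eq_sum_mul_of_le_of_binary (hy : ∀ u ∈ s, y u = 0 ∨ y u = 1)
    (hsum : ∑ u ∈ s, y u ≤ 1) (hz : ∀ u ∈ s, 0 ≤ z u) (hzy : ∀ u ∈ s, z u ≤ y u) :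
    ∀ v ∈ s, z v = (∑ u ∈ s, z u) * y v := by
  have hz_of_zero : ∀ u ∈ s, y u = 0 → z u = 0 := fun u hu hyu =>
    le_antisymm (hyu ▸ hzy u hu) (hz u hu)
  intro v hv
  rcases hy v hv with hyv | hyv
  · rw [hz_of_zero v hv hyv, hyv, mul_zero]
  · have hy_nonneg : ∀ u ∈ s, 0 ≤ y u := fun u hu => (hy u hu).elim (·.ge) (· ▸ zero_le_one)
    have hsingle : ∑ u ∈ s, z u = z v := sum_eq_single_of_mem v hv fun u hu huv =>
      hz_of_zero u hu (eq_zero_of_ne_of_sum_le_one hy_nonneg hsum hv hu huv hyv)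
    rw [hsingle, hyv, mul_one]

end Finset

/-- **Arc-flow product formula.** For every feasible flow assignment, every
internal node `u` (in layer `l < D`) and every successor `v ∈ δ⁺(u)`:
`z⁺_{uv} = w⁺_u · y⁺_{uv}` and `z⁻_{uv} = w⁻_u · y⁻_{uv}`. -/
theorem arc_flow_product {Node : Type} [DecidableEq Node]
    (S : Skeleton Node) (F : FeasibleFlow S) :
    ∀ l, l < S.D → ∀ u ∈ S.V l, ∀ v ∈ S.succ l,
      F.zp u v = F.wp u * F.yp u v ∧ F.zm u v = F.wm u * F.ym u v := by
  intro l hl u hu v hv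
  have hd : F.d u ≤ 1 := (F.d_bin l hl u hu).elim (· ▸ zero_le_one) (·.le)
  constructor
  · rw [F.c2p l hl u hu]
    exact Finset.eq_sum_mul_of_le_of_binary (F.yp_bin l hl u hu) (F.c4p l hl u hu ▸ hd)
      (fun _ _ => F.zp_nonneg u _) (F.c5p l hl u hu) v hv
  · rw [F.c2m l hl u hu]
    exact Finset.eq_sum_mul_of_le_of_binary (F.ym_bin l hl u hu) (F.c4m l hl u hu ▸ hd)
      (fun _ _ => F.zm_nonneg u _) (F.c5m l hl u hu) v hv
end

section
/- Flow-conservation invariant across layers. For every feasible flow assignment of a layered decision-diagram skeleton and every l ∈ {0, …, D−1}: Σ_{u∈V_l} (w⁺_u + w⁻_u) + Σ_{v∈C} Σ_{l'<l} Σ_{u∈V_{l'}} (z⁺_{uv} + z⁻_{uv}) = 1; that is, the unit of flow emitted at the root is, at each depth, split exactly between the current layer of internal nodes and the flow already absorbed by terminal nodes via long arcs from earlier layers. -/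
/-!
Induction on the depth. By (C2) the flow through layer `l` leaves it along arcs into
`δ⁺ = V (l + 1) ∪ C`; by (C1) the part entering `V (l + 1)` is exactly the flow through
that layer, and the part entering `C` is the newly absorbed flow.
-/

theorem Skeleton.succ_of_lt {Node : Type} [DecidableEq Node] (S : Skeleton Node) {l : ℕ}
    (hl : l + 1 < S.D) : S.succ l = S.V (l + 1) ∪ S.C :=
  if_pos (by omega)

namespace FeasibleFlow

variable {Node : Type} [DecidableEq Node] {S : Skeleton Node} (F : FeasibleFlow S)

theorem sum_layer_eq_sum_outflow {l : ℕ} (hl : l < S.D) :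
    ∑ u ∈ S.V l, (F.wp u + F.wm u) =
      ∑ v ∈ S.succ l, ∑ u ∈ S.V l, (F.zp u v + F.zm u v) := by
  rw [Finset.sum_comm]
  refine Finset.sum_congr rfl fun u hu => ?_
  rw [F.c2p l hl u hu, F.c2m l hl u hu, Finset.sum_add_distrib]

theorem sum_layer_succ_eq_sum_inflow {l : ℕ} (hl : l + 1 < S.D) :
    ∑ v ∈ S.V (l + 1), (F.wp v + F.wm v) =
      ∑ v ∈ S.V (l + 1), ∑ u ∈ S.V l, (F.zp u v + F.zm u v) :=
  Finset.sum_congr rfl fun v hv => F.c1 (l + 1) (by omega) hl v hv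

theorem sum_layer_eq_sum_layer_succ_add_absorbed {l : ℕ} (hl : l + 1 < S.D) :
    ∑ u ∈ S.V l, (F.wp u + F.wm u) =
      ∑ v ∈ S.V (l + 1), (F.wp v + F.wm v) +
        ∑ v ∈ S.C, ∑ u ∈ S.V l, (F.zp u v + F.zm u v) := by
  rw [F.sum_layer_eq_sum_outflow (by omega), S.succ_of_lt hl,
    Finset.sum_union (S.hVC (l + 1) hl), F.sum_layer_succ_eq_sum_inflow hl]

end FeasibleFlow

/-- **Flow-conservation invariant across layers.** For every feasible flow
assignment and every `l < D`: the flow currently in layer `l` plus the flow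
already absorbed by terminal nodes via long arcs from layers `l' < l` equals the
unit of flow emitted at the root. -/
theorem flow_conservation_invariant {Node : Type} [DecidableEq Node]
    (S : Skeleton Node) (F : FeasibleFlow S) :
    ∀ l, l < S.D →
      (∑ u ∈ S.V l, (F.wp u + F.wm u)) +
        (∑ v ∈ S.C, ∑ l' ∈ Finset.range l, ∑ u ∈ S.V l',
          (F.zp u v + F.zm u v)) = 1 := by
  intro l hl
  induction l with
  | zero => simp [S.hV0, F.c1_root]
  | succ l ih =>
    rw [← ih (by omega), F.sum_layer_eq_sum_layer_succ_add_absorbed hl]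
    simp only [Finset.sum_range_succ, Finset.sum_add_distrib]
    ring
end
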